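/- arXiv:1911.02269 — 2 statements merged into one kernel-verified Lean document; each statement's English description precedes it below -/
import Mathlib

section
/- Let G be a compact Hausdorff abelian topological group, let E be a finite subextension of Q̄_ℓ/ℚ_ℓ, let χ : G → O_E^×/μ_E be a continuous group homomorphism, and let n ≥ 1 be an integer. Then there exist a finite subextension E' of Q̄_ℓ/ℚ_ℓ containing E and a continuous group homomorphism ξ : G → O_{E'}^×/μ_{E'} such that ξ^n equals the composition of χ with the natural map O_E^×/μ_E → O_{E'}^×/μ_{E'} induced by the inclusion O_E^× ⊆ O_{E'}^×. -/
/-! Setup: `K` plays the role of `Q̄_ℓ`: an algebraic closure of `ℚ_ℓ`, viewed as a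
normed field whose norm extends the `ℓ`-adic absolute value (this determines the
topology, such an extension being unique).  `mu K` is the group `μ` of roots of
unity of `K`; for a subextension `E`, `unitBall l K E` is the group `O_E^×`
(elements of `E` of absolute value one) and `muSub l K E` is `μ_E`, so that
`↥(unitBall l K E) ⧸ muSub l K E` is `O_E^×/μ_E` with its quotient topology, and
`mapQ` is the natural map `O_E^×/μ_E → O_{E'}^×/μ_{E'}` for `E ≤ E'`. -/

/-- The group `μ` of roots of unity of `K`, as a subgroup of `Kˣ`. -/
def mu (K : Type*) [Field K] : Subgroup Kˣ where
  carrier := {x | ∃ n : ℕ, 0 < n ∧ x ^ n = 1}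
  one_mem' := ⟨1, Nat.one_pos, one_pow 1⟩
  mul_mem' := by
    rintro a b ⟨m, hm, ha⟩ ⟨n, hn, hb⟩
    refine ⟨m * n, Nat.mul_pos hm hn, ?_⟩
    rw [mul_pow, pow_mul, ha, one_pow, one_mul, pow_mul', hb, one_pow]
  inv_mem' := by
    rintro a ⟨n, hn, ha⟩
    exact ⟨n, hn, by rw [inv_pow, ha, inv_one]⟩

/-- `O_E^×`, the unit group of the ring of integers `O_E = E ∩ Z̄_ℓ` of a
subextension `E`, realized as the subgroup of `Kˣ` of elements of `E` of
absolute value `1`. -/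
def unitBall (l : ℕ) [Fact l.Prime] (K : Type*) [NormedField K] [Algebra ℚ_[l] K]
    (E : IntermediateField ℚ_[l] K) : Subgroup Kˣ where
  carrier := {x | (x : K) ∈ E ∧ ‖(x : K)‖ = 1}
  one_mem' := ⟨by simpa using E.one_mem, by simp⟩
  mul_mem' := by
    rintro a b ⟨haE, ha⟩ ⟨hbE, hb⟩
    exact ⟨by simpa using E.mul_mem haE hbE, by simp [ha, hb]⟩
  inv_mem' := by
    rintro a ⟨haE, ha⟩
    exact ⟨by simpa using E.inv_mem haE, by simp [ha]⟩

/-- `μ_E`, the group of roots of unity of `E`, as a subgroup of `O_E^×`. -/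
def muSub (l : ℕ) [Fact l.Prime] (K : Type*) [NormedField K] [Algebra ℚ_[l] K]
    (E : IntermediateField ℚ_[l] K) : Subgroup ↥(unitBall l K E) :=
  (mu K).subgroupOf (unitBall l K E)

lemma unitBall_mono (l : ℕ) [Fact l.Prime] (K : Type*) [NormedField K]
    [Algebra ℚ_[l] K] {E E' : IntermediateField ℚ_[l] K} (h : E ≤ E') :
    unitBall l K E ≤ unitBall l K E' := fun _ hx => ⟨h hx.1, hx.2⟩

/-- The natural map `O_E^×/μ_E → O_{E'}^×/μ_{E'}` induced by an inclusion `E ≤ E'`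
of subextensions. -/
noncomputable def mapQ (l : ℕ) [Fact l.Prime] (K : Type*) [NormedField K]
    [Algebra ℚ_[l] K] {E E' : IntermediateField ℚ_[l] K} (h : E ≤ E') :
    (↥(unitBall l K E) ⧸ muSub l K E) →* ↥(unitBall l K E') ⧸ muSub l K E' :=
  QuotientGroup.map (muSub l K E) (muSub l K E')
    (Subgroup.inclusion (unitBall_mono l K h)) (fun _ hx => hx)

/-! Since `O_E^×` is compact, finitely many balls `B(s, ‖n‖²)` with `s ∈ O_E^×` cover it.
Adjoining an `n`-th root of each centre `s` gives a finite extension `E'`, in which every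
`x ∈ O_E^×` has an `n`-th root by Hensel's lemma applied to `x / s`.  An element whose `n`-th
power is a root of unity is itself one, so `q ↦ q ^ n` is injective on `O_{E'}^×/μ_{E'}` and the
`n`-th roots of the values of `χ` form a homomorphism `ξ`.  A root of unity `ζ ≠ 1` satisfies
`‖ζ - 1‖ ≥ ‖p‖` for some prime `p`, so `μ` is discrete, hence closed; thus `O_{E'}^×/μ_{E'}` is
compact Hausdorff, `q ↦ q ^ n` is a closed embedding of it, and `ξ` is continuous. -/

open Set

namespace IsUltrametricDist

variable {F : Type*} [NormedField F] [IsUltrametricDist F]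

theorem norm_le_one_of_norm_sub_one_le_one {x : F} (hx : ‖x - 1‖ ≤ 1) : ‖x‖ ≤ 1 :=
  calc ‖x‖ = ‖(x - 1) + 1‖ := by rw [sub_add_cancel]
    _ ≤ max ‖x - 1‖ ‖(1 : F)‖ := norm_add_le_max _ _
    _ ≤ 1 := max_le hx norm_one.le

theorem norm_pow_sub_one_le {x : F} (hx : ‖x‖ ≤ 1) (n : ℕ) : ‖x ^ n - 1‖ ≤ ‖x - 1‖ := by
  induction n with
  | zero => simp
  | succ n ih =>
    have hxn : ‖x ^ n * (x - 1)‖ ≤ ‖x - 1‖ := by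
      rw [norm_mul, norm_pow]
      exact mul_le_of_le_one_left (norm_nonneg _) (pow_le_one₀ (norm_nonneg x) hx)
    calc ‖x ^ (n + 1) - 1‖ = ‖x ^ n * (x - 1) + (x ^ n - 1)‖ := by ring_nf
      _ ≤ ‖x - 1‖ := (norm_add_le_max _ _).trans (max_le hxn ih)

theorem norm_pow_sub_pow_sub_mul_sub_le {x y : F} (hx : ‖x‖ ≤ 1) (hy : ‖y‖ ≤ 1) (n : ℕ) :
    ‖x ^ n - y ^ n - n * (x - y)‖ ≤ max ‖x - 1‖ ‖y - 1‖ * ‖x - y‖ := by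
  induction n with
  | zero =>
    simp only [pow_zero, sub_self, Nat.cast_zero, zero_mul, norm_zero]
    positivity
  | succ n ih =>
    have hfirst : ‖(x ^ n - y ^ n - n * (x - y)) * x‖ ≤ max ‖x - 1‖ ‖y - 1‖ * ‖x - y‖ := by
      rw [norm_mul]
      exact (mul_le_of_le_one_right (norm_nonneg _) hx).trans ih
    have hsecond : ‖(x - y) * (n * (x - 1) + (y ^ n - 1))‖ ≤ max ‖x - 1‖ ‖y - 1‖ * ‖x - y‖ := by
      rw [norm_mul, mul_comm]
      refine mul_le_mul_of_nonneg_right ((norm_add_le_max _ _).trans (max_le_max ?_ ?_))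
        (norm_nonneg _)
      · rw [norm_mul]
        exact mul_le_of_le_one_left (norm_nonneg _) (norm_natCast_le_one F n)
      · exact norm_pow_sub_one_le hy n
    calc ‖x ^ (n + 1) - y ^ (n + 1) - ↑(n + 1) * (x - y)‖
        = ‖(x ^ n - y ^ n - n * (x - y)) * x + (x - y) * (n * (x - 1) + (y ^ n - 1))‖ := by
          push_cast; ring_nf
      _ ≤ max ‖x - 1‖ ‖y - 1‖ * ‖x - y‖ := (norm_add_le_max _ _).trans (max_le hfirst hsecond)

theorem norm_pow_sub_one_sub_mul_sub_one_le {x : F} (hx : ‖x‖ ≤ 1) (n : ℕ) :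
    ‖x ^ n - 1 - n * (x - 1)‖ ≤ ‖x - 1‖ ^ 2 := by
  simpa [sq] using norm_pow_sub_pow_sub_mul_sub_le hx norm_one.le n

/-- Newton's iteration `x ↦ x - (x ^ n - u) / n` contracts the closed ball of radius
`‖u - 1‖ / ‖n‖` about `1`. -/
theorem exists_pow_eq_of_norm_sub_one_lt [CompleteSpace F] {n : ℕ} (hn : (n : F) ≠ 0) {u : F}
    (hu : ‖u - 1‖ < ‖(n : F)‖ ^ 2) : ∃ x : F, x ^ n = u := by
  set c := ‖(n : F)‖
  set r := ‖u - 1‖ / c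
  have hc : 0 < c := norm_pos_iff.mpr hn
  have hr : 0 ≤ r := by positivity
  have hrc : r < c := by rw [div_lt_iff₀ hc]; nlinarith
  have hr1 : r ≤ 1 := hrc.le.trans (norm_natCast_le_one F n)
  have hrr : r * r ≤ ‖u - 1‖ := by
    calc r * r ≤ r * c := by gcongr
      _ = ‖u - 1‖ := div_mul_cancel₀ _ hc.ne'
  have hball {x : F} (hx : x ∈ Metric.closedBall 1 r) : ‖x - 1‖ ≤ r := by
    rwa [Metric.mem_closedBall, dist_eq_norm] at hx
  have hball1 {x : F} (hx : x ∈ Metric.closedBall 1 r) : ‖x‖ ≤ 1 :=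
    norm_le_one_of_norm_sub_one_le_one ((hball hx).trans hr1)
  set Φ : F → F := fun x => x - (x ^ n - u) / n
  have hmaps : MapsTo Φ (Metric.closedBall 1 r) (Metric.closedBall 1 r) := by
    intro x hx
    have hΦ : Φ x - 1 = ((u - 1) - (x ^ n - 1 - n * (x - 1))) / n := by
      simp only [Φ]; field_simp; ring
    have htaylor := norm_pow_sub_one_sub_mul_sub_one_le (hball1 hx) n
    rw [Metric.mem_closedBall, dist_eq_norm, hΦ, norm_div, div_le_div_iff_of_pos_right hc,
      sub_eq_add_neg]
    refine (norm_add_le_max _ _).trans (max_le le_rfl ?_)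
    rw [norm_neg]
    nlinarith [hball hx, norm_nonneg (x - 1)]
  have hlip : ∀ x ∈ Metric.closedBall 1 r, ∀ y ∈ Metric.closedBall 1 r,
      dist (Φ x) (Φ y) ≤ r / c * dist x y := by
    intro x hx y hy
    have hΦ : Φ x - Φ y = -((x ^ n - y ^ n - n * (x - y)) / n) := by
      simp only [Φ]; field_simp; ring
    rw [dist_eq_norm, dist_eq_norm, hΦ, norm_neg, norm_div, div_mul_eq_mul_div,
      div_le_div_iff_of_pos_right hc]
    exact (norm_pow_sub_pow_sub_mul_sub_le (hball1 hx) (hball1 hy) n).trans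
      (by gcongr; exact max_le (hball hx) (hball hy))
  have hcontr : ContractingWith (r / c).toNNReal (hmaps.restrict Φ _ _) := by
    refine ⟨Real.toNNReal_lt_one.mpr ((div_lt_one hc).mpr hrc),
      LipschitzWith.of_dist_le_mul fun x y => ?_⟩
    rw [Real.coe_toNNReal _ (by positivity)]
    exact hlip x x.2 y y.2
  obtain ⟨x, -, hfix, -⟩ := hcontr.exists_fixedPoint' Metric.isClosed_closedBall.isComplete hmaps
    (Metric.mem_closedBall_self hr) (edist_ne_top _ _)
  refine ⟨x, ?_⟩
  have hstep : (x ^ n - u) / n = 0 := by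
    have hΦx := hfix.eq
    simp only [Φ] at hΦx
    linear_combination -hΦx
  rwa [div_eq_zero_iff, or_iff_left hn, sub_eq_zero] at hstep

theorem eq_one_of_pow_eq_one_of_norm_sub_one_lt {z : F} {k : ℕ} (hz : z ^ k = 1)
    (h : ‖z - 1‖ < ‖(k : F)‖) : z = 1 := by
  by_contra hne
  have hpos : 0 < ‖z - 1‖ := norm_pos_iff.mpr (sub_ne_zero.mpr hne)
  have htaylor := norm_pow_sub_one_sub_mul_sub_one_le
    (norm_le_one_of_norm_sub_one_le_one (h.le.trans (norm_natCast_le_one F k))) k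
  rw [hz, sub_self, zero_sub, norm_neg, norm_mul] at htaylor
  nlinarith

theorem eq_one_of_pow_eq_one_of_forall_prime {z : F} {m : ℕ} (hm : m ≠ 0) (hz : z ^ m = 1)
    (h : ∀ p : ℕ, p.Prime → ‖z - 1‖ < ‖(p : F)‖) : z = 1 := by
  induction m using Nat.recOnMul generalizing z with
  | zero => exact absurd rfl hm
  | one => simpa using hz
  | prime p hp => exact eq_one_of_pow_eq_one_of_norm_sub_one_lt hz (h p hp)
  | mul a b iha ihb =>
    have hz1 : ‖z‖ ≤ 1 := norm_le_one_of_norm_sub_one_le_one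
      ((h 2 Nat.prime_two).le.trans (norm_natCast_le_one F 2))
    have hza : z ^ a = 1 := ihb (right_ne_zero_of_mul hm) (by rw [← pow_mul, hz])
      fun p hp => (norm_pow_sub_one_le hz1 a).trans_lt (h p hp)
    exact iha (left_ne_zero_of_mul hm) hza h

end IsUltrametricDist

theorem QuotientGroup.pow_injective_of_pow_mem {A : Type*} [CommGroup A] {H : Subgroup A}
    {n : ℕ} (hH : ∀ a, a ^ n ∈ H → a ∈ H) : Function.Injective fun q : A ⧸ H => q ^ n := by
  refine (injective_iff_map_eq_one (powMonoidHom n : A ⧸ H →* A ⧸ H)).mpr fun q hq => ?_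
  induction q using QuotientGroup.induction_on with
  | H a =>
    rw [powMonoidHom_apply, ← QuotientGroup.mk_pow, QuotientGroup.eq_one_iff] at hq
    exact (QuotientGroup.eq_one_iff a).mpr (hH a hq)

theorem MonoidHom.exists_continuous_pow_eq {G A : Type*} [MulOneClass G] [TopologicalSpace G]
    [CommGroup A] [TopologicalSpace A] [ContinuousMul A] [CompactSpace A] [T2Space A] {n : ℕ}
    (hinj : Function.Injective fun a : A => a ^ n) (f : G →* A) (hf : Continuous f)
    (hroot : ∀ g, ∃ a, a ^ n = f g) : ∃ ξ : G →* A, Continuous ξ ∧ ∀ g, ξ g ^ n = f g := by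
  choose ξ hξ using hroot
  refine ⟨MonoidHom.mk' ξ fun a b => hinj ?_, ?_, hξ⟩
  · simp only [mul_pow, hξ, map_mul]
  · rw [((continuous_pow n).isClosedEmbedding hinj).continuous_iff]
    show Continuous ((· ^ n) ∘ ξ)
    rwa [show (· ^ n) ∘ ξ = f from funext hξ]

theorem norm_eq_one_of_pow_eq {F : Type*} [NormedDivisionRing F] {x y : F} {n : ℕ} (hn : n ≠ 0)
    (h : x ^ n = y) (hy : ‖y‖ = 1) : ‖x‖ = 1 :=
  (pow_eq_one_iff_of_nonneg (norm_nonneg x) hn).mp (by rw [← norm_pow, h, hy])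

theorem mem_mu_of_pow_mem {F : Type*} [Field F] {x : Fˣ} {n : ℕ} (hn : n ≠ 0)
    (hx : x ^ n ∈ mu F) : x ∈ mu F := by
  obtain ⟨m, hm, hxm⟩ := hx
  exact ⟨n * m, Nat.mul_pos (Nat.pos_of_ne_zero hn) hm, by rw [pow_mul, hxm]⟩

theorem isClosed_mu_of_forall_le_norm_prime {F : Type*} [NormedField F] [IsUltrametricDist F]
    {δ : ℝ} (hδ : 0 < δ) (h : ∀ p : ℕ, p.Prime → δ ≤ ‖(p : F)‖) : IsClosed (mu F : Set Fˣ) := by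
  suffices IsOpen ({1} : Set (mu F)) by
    have := discreteTopology_of_isOpen_singleton_one this
    exact Subgroup.isClosed_of_discrete
  refine isOpen_induced_iff.mpr ⟨{z : Fˣ | ‖(z : F) - 1‖ < δ},
    isOpen_lt (by fun_prop) continuous_const, ?_⟩
  ext ⟨z, m, hm, hzm⟩
  simp only [mem_preimage, mem_ofPred_eq, mem_singleton_iff]
  refine ⟨fun hz => Subtype.ext (Units.val_eq_one.mp ?_), fun hz => ?_⟩
  · refine IsUltrametricDist.eq_one_of_pow_eq_one_of_forall_prime hm.ne' ?_
      fun p hp => hz.trans_le (h p hp)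
    rw [← Units.val_pow_eq_pow_val, hzm, Units.val_one]
  · have hz1 : z = 1 := congrArg Subtype.val hz
    simpa [hz1] using hδ

section Padic

variable {l : ℕ} [Fact l.Prime] {K : Type*} [NormedField K]

theorem continuous_mapQ [Algebra ℚ_[l] K] {E E' : IntermediateField ℚ_[l] K} (h : E ≤ E') :
    Continuous (mapQ l K h) := by
  rw [(QuotientGroup.isQuotientMap_mk (muSub l K E)).continuous_iff]
  exact QuotientGroup.continuous_mk.comp (continuous_subtype_val.subtype_mk _)

theorem pow_injective_quotient_muSub [Algebra ℚ_[l] K] (E : IntermediateField ℚ_[l] K) {n : ℕ}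
    (hn : n ≠ 0) : Function.Injective fun q : ↥(unitBall l K E) ⧸ muSub l K E => q ^ n :=
  QuotientGroup.pow_injective_of_pow_mem fun _ hx => mem_mu_of_pow_mem hn hx

theorem exists_pow_eq_mapQ [Algebra ℚ_[l] K] {E E' : IntermediateField ℚ_[l] K} (h : E ≤ E')
    {n : ℕ} (hroot : ∀ x ∈ unitBall l K E, ∃ w ∈ unitBall l K E', w ^ n = x)
    (q : ↥(unitBall l K E) ⧸ muSub l K E) : ∃ q', q' ^ n = mapQ l K h q := by
  induction q using QuotientGroup.induction_on with
  | H x =>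
    obtain ⟨w, hw, hwx⟩ := hroot x x.2
    exact ⟨QuotientGroup.mk ⟨w, hw⟩, congrArg QuotientGroup.mk (Subtype.ext hwx)⟩

variable [NormedAlgebra ℚ_[l] K]

theorem inv_le_norm_natCast_of_prime {p : ℕ} (hp : p.Prime) : (l : ℝ)⁻¹ ≤ ‖(p : K)‖ := by
  rw [← map_natCast (algebraMap ℚ_[l] K), norm_algebraMap']
  rcases eq_or_ne p l with rfl | hpl
  · exact (Padic.norm_p).ge
  · rw [Padic.norm_natCast_eq_one_iff.mpr ((Nat.coprime_primes Fact.out hp).mpr hpl.symm)]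
    exact inv_le_one_of_one_le₀ (by exact_mod_cast (Fact.out : l.Prime).one_le)

theorem isClosed_muSub (E : IntermediateField ℚ_[l] K) :
    IsClosed (muSub l K E : Set ↥(unitBall l K E)) :=
  have : IsUltrametricDist K := .of_normedAlgebra ℚ_[l]
  (isClosed_mu_of_forall_le_norm_prime (by have := (Fact.out : l.Prime).pos; positivity)
    fun _ => inv_le_norm_natCast_of_prime (K := K)).preimage continuous_subtype_val

theorem isCompact_unitBall (E : IntermediateField ℚ_[l] K) [FiniteDimensional ℚ_[l] E] :
    IsCompact (unitBall l K E : Set Kˣ) := by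
  have : ProperSpace E := FiniteDimensional.proper ℚ_[l] E
  rw [Units.isEmbedding_val₀.isCompact_iff]
  convert (isCompact_sphere (0 : E) 1).image continuous_subtype_val using 1
  ext x
  constructor
  · rintro ⟨y, ⟨hyE, hy1⟩, rfl⟩
    exact ⟨⟨y, hyE⟩, by simpa using hy1, rfl⟩
  · rintro ⟨y, hy, rfl⟩
    have hy1 : ‖(y : K)‖ = 1 := by simpa using hy
    exact ⟨Units.mk0 _ (norm_ne_zero_iff.mp (hy1 ▸ one_ne_zero)), ⟨y.2, hy1⟩, rfl⟩

theorem exists_pow_eq_of_norm_sub_pow_lt (E : IntermediateField ℚ_[l] K)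
    [FiniteDimensional ℚ_[l] E] {n : ℕ} (hn : (n : K) ≠ 0) {x y : K} (hx : x ∈ E) (hy : y ∈ E)
    (hy1 : ‖y‖ = 1) (hxy : ‖x - y ^ n‖ < ‖(n : K)‖ ^ 2) : ∃ w ∈ E, w ^ n = x := by
  have : IsUltrametricDist E := .of_normedAlgebra ℚ_[l]
  have : CompleteSpace E := FiniteDimensional.complete ℚ_[l] E
  have hyn : y ^ n ≠ 0 := pow_ne_zero _ (norm_ne_zero_iff.mp (hy1 ▸ one_ne_zero))
  have hnE : (n : E) ≠ 0 := fun h => hn (by simpa using congrArg Subtype.val h)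
  have hu : ‖(⟨x / y ^ n, E.div_mem hx (pow_mem hy n)⟩ - 1 : E)‖ < ‖(n : E)‖ ^ 2 := by
    show ‖x / y ^ n - 1‖ < ‖((n : E) : K)‖ ^ 2
    rw [← div_self hyn, ← sub_div, norm_div, norm_pow, hy1, one_pow, div_one]
    simpa using hxy
  obtain ⟨v, hv⟩ := IsUltrametricDist.exists_pow_eq_of_norm_sub_one_lt hnE hu
  refine ⟨y * v, E.mul_mem hy v.2, ?_⟩
  have hvK : (v : K) ^ n = x / y ^ n := congrArg Subtype.val hv
  rw [mul_pow, hvK, mul_div_cancel₀ _ hyn]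

theorem exists_finiteDimensional_forall_exists_pow_eq [IsAlgClosure ℚ_[l] K]
    (E : IntermediateField ℚ_[l] K) [FiniteDimensional ℚ_[l] E] {n : ℕ} (hn : n ≠ 0) :
    ∃ E' : IntermediateField ℚ_[l] K, E ≤ E' ∧ FiniteDimensional ℚ_[l] E' ∧
      ∀ x ∈ unitBall l K E, ∃ w ∈ unitBall l K E', w ^ n = x := by
  have : CharZero K := charZero_of_injective_algebraMap (algebraMap ℚ_[l] K).injective
  have : IsAlgClosed K := IsAlgClosure.isAlgClosed ℚ_[l]
  have : Algebra.IsAlgebraic ℚ_[l] K := IsAlgClosure.isAlgebraic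
  have hnK : (n : K) ≠ 0 := Nat.cast_ne_zero.mpr hn
  obtain ⟨t, htE, hcover⟩ :=
    (Units.isEmbedding_val₀.isCompact_iff.mp (isCompact_unitBall E)).elim_nhds_subcover
      (fun s => Metric.ball s (‖(n : K)‖ ^ 2)) fun s _ => Metric.ball_mem_nhds s (by positivity)
  choose root hroot using fun s : K => IsAlgClosed.exists_pow_nat_eq s (Nat.pos_of_ne_zero hn)
  set E' := E ⊔ IntermediateField.adjoin ℚ_[l] (root '' t)
  have : Finite (root '' t) := (t.finite_toSet.image root).to_subtype
  have : FiniteDimensional ℚ_[l] (IntermediateField.adjoin ℚ_[l] (root '' t)) :=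
    IntermediateField.finiteDimensional_adjoin fun x _ =>
      (Algebra.IsAlgebraic.isAlgebraic x).isIntegral
  refine ⟨E', le_sup_left, inferInstance, fun x hx => ?_⟩
  obtain ⟨s, hst, hxs⟩ := mem_iUnion₂.mp (hcover ⟨x, hx, rfl⟩)
  obtain ⟨s, ⟨hsE, hs1⟩, rfl⟩ := htE s hst
  obtain ⟨w, hwE', hwx⟩ := exists_pow_eq_of_norm_sub_pow_lt E' hnK (le_sup_left (a := E) hx.1)
    (le_sup_right (a := E) (IntermediateField.subset_adjoin ℚ_[l] _ ⟨s, hst, rfl⟩))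
    (norm_eq_one_of_pow_eq hn (hroot s) hs1) (by rwa [hroot, ← dist_eq_norm])
  have hw1 : ‖w‖ = 1 := norm_eq_one_of_pow_eq hn hwx hx.2
  exact ⟨Units.mk0 w (norm_ne_zero_iff.mp (hw1 ▸ one_ne_zero)), ⟨hwE', hw1⟩,
    Units.ext (by simpa using hwx)⟩

end Padic

theorem theta_divisible_step_general
    {l : ℕ} [Fact l.Prime]
    (K : Type*) [NormedField K] [Algebra ℚ_[l] K] [IsAlgClosure ℚ_[l] K]
    (hnorm : ∀ x : ℚ_[l], ‖algebraMap ℚ_[l] K x‖ = ‖x‖)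
    (G : Type*) [CommGroup G] [TopologicalSpace G]
    (E : IntermediateField ℚ_[l] K) [FiniteDimensional ℚ_[l] E]
    (χ : G →* ↥(unitBall l K E) ⧸ muSub l K E) (hχ : Continuous χ)
    (n : ℕ) (hn : 1 ≤ n) :
    ∃ (E' : IntermediateField ℚ_[l] K) (h : E ≤ E'),
      FiniteDimensional ℚ_[l] E' ∧
      ∃ ξ : G →* ↥(unitBall l K E') ⧸ muSub l K E',
        Continuous ξ ∧ ∀ g, ξ g ^ n = mapQ l K h (χ g) := by
  let : NormedAlgebra ℚ_[l] K := ⟨fun c x => by rw [Algebra.smul_def, norm_mul, hnorm]⟩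
  obtain ⟨E', hEE', hE', hroot⟩ :=
    exists_finiteDimensional_forall_exists_pow_eq E (n := n) (by omega)
  have : CompactSpace (unitBall l K E') := isCompact_iff_compactSpace.mp (isCompact_unitBall E')
  have : IsClosed (muSub l K E' : Set (unitBall l K E')) := isClosed_muSub E'
  obtain ⟨ξ, hξ, hξχ⟩ :=
    MonoidHom.exists_continuous_pow_eq (A := ↥(unitBall l K E') ⧸ muSub l K E') (n := n)
      (pow_injective_quotient_muSub E' (by omega)) ((mapQ l K hEE').comp χ)
      ((continuous_mapQ hEE').comp hχ) fun g => exists_pow_eq_mapQ hEE' hroot (χ g)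
  exact ⟨E', hEE', hE', ξ, hξ, hξχ⟩

/-- Let `G` be a compact Hausdorff abelian topological group, `E` a
finite subextension of `Q̄_ℓ/ℚ_ℓ`, `χ : G → O_E^×/μ_E` a continuous homomorphism
and `n ≥ 1`.  Then there are a finite subextension `E' ⊇ E` and a continuous
homomorphism `ξ : G → O_{E'}^×/μ_{E'}` with `ξ^n` equal to the composition of `χ`
with the natural map `O_E^×/μ_E → O_{E'}^×/μ_{E'}`. -/
theorem theta_divisible_step
    {l : ℕ} [Fact l.Prime]
    (K : Type*) [NormedField K] [Algebra ℚ_[l] K] [IsAlgClosure ℚ_[l] K]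
    (hnorm : ∀ x : ℚ_[l], ‖algebraMap ℚ_[l] K x‖ = ‖x‖)
    (G : Type*) [CommGroup G] [TopologicalSpace G] [IsTopologicalGroup G]
    [CompactSpace G] [T2Space G]
    (E : IntermediateField ℚ_[l] K) [FiniteDimensional ℚ_[l] E]
    (χ : G →* ↥(unitBall l K E) ⧸ muSub l K E) (hχ : Continuous χ)
    (n : ℕ) (hn : 1 ≤ n) :
    ∃ (E' : IntermediateField ℚ_[l] K) (h : E ≤ E'),
      FiniteDimensional ℚ_[l] E' ∧
      ∃ ξ : G →* ↥(unitBall l K E') ⧸ muSub l K E',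
        Continuous ξ ∧ ∀ g, ξ g ^ n = mapQ l K h (χ g) :=
  theta_divisible_step_general K hnorm G E χ hχ n hn
end

section
/- Let G be a compact Hausdorff abelian topological group and let χ : G → Q̄_ℓ^× be a continuous group homomorphism all of whose values are roots of unity. Then χ has finite order: there exists an integer m ≥ 1 such that χ(g)^m = 1 for all g ∈ G. -/
/-!
In an ultrametric field, if `q` is a prime dividing the order of a root of unity `ζ ≠ 1`, then
`ξ = ζ ^ d` is a primitive `q`-th root of unity for suitable `d`, and
`q = Φ_q(1) = ∏_{0 < i < q} (1 - ξ ^ i)` with `‖1 - ξ ^ i‖ ≤ ‖1 - ξ‖ ≤ ‖1 - ζ‖` gives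
`‖q‖ ≤ ‖ζ - 1‖ ^ (q - 1)`. Over `ℚ_ℓ` every prime has norm at least `ℓ⁻¹`, so every root of
unity `ζ ≠ 1` satisfies `ℓ⁻¹ ≤ ‖ζ - 1‖`. The preimage under `χ` of the ball of radius `ℓ⁻¹`
around `1` is therefore contained in `ker χ`, which is thus open, hence of finite index in the
compact group `G`, and that index kills `χ`.
-/

open Polynomial Topology

lemma norm_pow_sub_one_le_norm_sub_one {R : Type*} [NormedRing R] [NormOneClass R]
    [IsUltrametricDist R] {ζ : R} (hζ : ‖ζ‖ ≤ 1) (k : ℕ) : ‖ζ ^ k - 1‖ ≤ ‖ζ - 1‖ := by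
  rw [← geom_sum_mul]
  refine (norm_mul_le _ _).trans (mul_le_of_le_one_left (norm_nonneg _) ?_)
  exact IsUltrametricDist.norm_sum_le_of_forall_le_of_nonneg zero_le_one fun i _ =>
    (norm_pow_le ζ i).trans (pow_le_one₀ (norm_nonneg ζ) hζ)

lemma norm_eq_one_of_pow_eq_one {K : Type*} [NormedDivisionRing K] {ζ : K} {n : ℕ} (hn : n ≠ 0)
    (hζ : ζ ^ n = 1) : ‖ζ‖ = 1 :=
  (pow_eq_one_iff_of_nonneg (norm_nonneg ζ) hn).mp (by rw [← norm_pow, hζ, norm_one])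

section Ultrametric

variable {K : Type*} [NormedField K] [IsUltrametricDist K]

lemma IsPrimitiveRoot.norm_natCast_le_norm_sub_one_pow {q : ℕ} (hq : q.Prime) {ξ : K}
    (hξ : IsPrimitiveRoot ξ q) : ‖(q : K)‖ ≤ ‖ξ - 1‖ ^ (q - 1) := by
  have : Fact q.Prime := ⟨hq⟩
  have hq_eq_prod : (q : K) = ∏ μ ∈ primitiveRoots q K, (1 - μ) := by
    have h := congrArg (eval 1) (cyclotomic_eq_prod_X_sub_primitiveRoots hξ)
    rw [eval_one_cyclotomic_prime] at h
    simpa [eval_prod] using h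
  have hξ_norm : ‖ξ‖ ≤ 1 := (norm_eq_one_of_pow_eq_one hq.ne_zero hξ.pow_eq_one).le
  have hfactor_le : ∀ μ ∈ primitiveRoots q K, ‖1 - μ‖ ≤ ‖ξ - 1‖ := by
    intro μ hμ
    obtain ⟨i, -, rfl⟩ :=
      hξ.eq_pow_of_pow_eq_one ((mem_primitiveRoots hq.pos).mp hμ).pow_eq_one
    rw [norm_sub_rev]
    exact norm_pow_sub_one_le_norm_sub_one hξ_norm i
  calc ‖(q : K)‖ = ∏ μ ∈ primitiveRoots q K, ‖1 - μ‖ := by rw [hq_eq_prod, norm_prod]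
    _ ≤ ∏ _μ ∈ primitiveRoots q K, ‖ξ - 1‖ :=
        Finset.prod_le_prod (fun _ _ => norm_nonneg _) hfactor_le
    _ = ‖ξ - 1‖ ^ (q - 1) := by
        rw [Finset.prod_const, hξ.card_primitiveRoots, Nat.totient_prime hq]

lemma exists_prime_norm_natCast_le_norm_sub_one_pow {ζ : K} {n : ℕ} (hn : n ≠ 0)
    (hζ : ζ ^ n = 1) (hζ_ne : ζ ≠ 1) : ∃ q : ℕ, q.Prime ∧ ‖(q : K)‖ ≤ ‖ζ - 1‖ ^ (q - 1) := by
  have hord : orderOf ζ ≠ 1 := fun h => hζ_ne (orderOf_eq_one_iff.mp h)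
  obtain ⟨q, hq, d, hd⟩ := Nat.exists_prime_and_dvd hord
  have hord_pos : 0 < orderOf ζ :=
    orderOf_pos_iff.mpr (isOfFinOrder_iff_pow_eq_one.mpr ⟨n, Nat.pos_of_ne_zero hn, hζ⟩)
  have hξ : IsPrimitiveRoot (ζ ^ d) q :=
    (IsPrimitiveRoot.orderOf ζ).pow hord_pos (by rw [hd, mul_comm])
  refine ⟨q, hq, (hξ.norm_natCast_le_norm_sub_one_pow hq).trans ?_⟩
  gcongr
  exact norm_pow_sub_one_le_norm_sub_one (norm_eq_one_of_pow_eq_one hn hζ).le d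

end Ultrametric

section Padic

variable {l : ℕ} [Fact l.Prime]

lemma Padic.inv_le_norm_natCast_of_prime {q : ℕ} (hq : q.Prime) :
    (l : ℝ)⁻¹ ≤ ‖(q : ℚ_[l])‖ := by
  rcases eq_or_ne q l with rfl | hql
  · rw [Padic.norm_p]
  · rw [Padic.norm_natCast_eq_one_iff.mpr ((Nat.coprime_primes Fact.out hq).mpr hql.symm)]
    exact inv_le_one_of_one_le₀ (by exact_mod_cast (Fact.out : l.Prime).one_lt.le)

variable {K : Type*} [NormedField K] [Algebra ℚ_[l] K]

lemma norm_natCast_eq_padicNorm (hnorm : ∀ x : ℚ_[l], ‖algebraMap ℚ_[l] K x‖ = ‖x‖) (n : ℕ) :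
    ‖(n : K)‖ = ‖(n : ℚ_[l])‖ := by
  rw [← map_natCast (algebraMap ℚ_[l] K), hnorm]

lemma isUltrametricDist_of_norm_algebraMap_padic
    (hnorm : ∀ x : ℚ_[l], ‖algebraMap ℚ_[l] K x‖ = ‖x‖) : IsUltrametricDist K :=
  IsUltrametricDist.isUltrametricDist_of_forall_norm_natCast_le_one fun n => by
    rw [norm_natCast_eq_padicNorm hnorm]
    exact_mod_cast Padic.norm_int_le_one (n : ℤ)

lemma inv_le_norm_sub_one_of_pow_eq_one
    (hnorm : ∀ x : ℚ_[l], ‖algebraMap ℚ_[l] K x‖ = ‖x‖) {ζ : K} {n : ℕ} (hn : n ≠ 0)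
    (hζ : ζ ^ n = 1) (hζ_ne : ζ ≠ 1) : (l : ℝ)⁻¹ ≤ ‖ζ - 1‖ := by
  have := isUltrametricDist_of_norm_algebraMap_padic hnorm
  obtain ⟨q, hq, hle⟩ := exists_prime_norm_natCast_le_norm_sub_one_pow hn hζ hζ_ne
  have hsub_le : ‖ζ - 1‖ ≤ 1 := by
    simpa [norm_eq_one_of_pow_eq_one hn hζ, ← sub_eq_add_neg] using
      IsUltrametricDist.norm_add_le_max ζ (-1)
  calc (l : ℝ)⁻¹ ≤ ‖(q : ℚ_[l])‖ := Padic.inv_le_norm_natCast_of_prime hq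
    _ = ‖(q : K)‖ := (norm_natCast_eq_padicNorm hnorm q).symm
    _ ≤ ‖ζ - 1‖ ^ (q - 1) := hle
    _ ≤ ‖ζ - 1‖ := pow_le_of_le_one (norm_nonneg _) hsub_le (Nat.sub_ne_zero_of_lt hq.one_lt)

end Padic

lemma MonoidHom.exists_pow_eq_one_of_isOpen_ker {G H : Type*} [Group G] [TopologicalSpace G]
    [SeparatelyContinuousMul G] [CompactSpace G] [Group H] (f : G →* H)
    (hf : IsOpen (f.ker : Set G)) : ∃ m : ℕ, 1 ≤ m ∧ ∀ g : G, f g ^ m = 1 := by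
  have := Subgroup.quotient_finite_of_isOpen f.ker hf
  refine ⟨f.ker.index, Nat.one_le_iff_ne_zero.mpr f.ker.index_ne_zero_of_finite, fun g => ?_⟩
  rw [← map_pow]
  exact f.ker.pow_index_mem g

theorem continuous_char_valued_in_roots_of_unity_finite_order_general
    {l : ℕ} [Fact l.Prime]
    (K : Type*) [NormedField K] [Algebra ℚ_[l] K]
    (hnorm : ∀ x : ℚ_[l], ‖algebraMap ℚ_[l] K x‖ = ‖x‖)
    (G : Type*) [CommGroup G] [TopologicalSpace G] [IsTopologicalGroup G]
    [CompactSpace G]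
    (χ : G →* Kˣ) (hχ : Continuous χ)
    (htors : ∀ g : G, ∃ n : ℕ, 0 < n ∧ χ g ^ n = 1) :
    ∃ m : ℕ, 1 ≤ m ∧ ∀ g : G, χ g ^ m = 1 := by
  have hball : {g : G | ‖(χ g : K) - 1‖ < (l : ℝ)⁻¹} ∈ 𝓝 1 := by
    refine (isOpen_lt (by fun_prop) continuous_const).mem_nhds ?_
    simpa using (Fact.out : l.Prime).pos
  have hker : IsOpen (χ.ker : Set G) := by
    refine Subgroup.isOpen_of_mem_nhds _ (Filter.mem_of_superset hball fun g hg => ?_)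
    obtain ⟨n, hn, hpow⟩ := htors g
    have hpow_val : (χ g : K) ^ n = 1 := by rw [← Units.val_pow_eq_pow_val, hpow, Units.val_one]
    by_contra hg_ker
    refine hg.not_ge (inv_le_norm_sub_one_of_pow_eq_one hnorm hn.ne' hpow_val fun h => ?_)
    exact hg_ker (χ.mem_ker.mpr (Units.ext h))
  exact χ.exists_pow_eq_one_of_isOpen_ker hker

/-- Let `K` be an algebraic closure of `ℚ_ℓ`, viewed as a normed
field whose norm extends the `ℓ`-adic absolute value (this determines the
topology, such an extension being unique).  Let `G` be a compact Hausdorff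
abelian topological group and `χ : G → Kˣ` a continuous homomorphism all of
whose values are roots of unity.  Then `χ` has finite order: some `m ≥ 1`
satisfies `χ(g)^m = 1` for all `g`. -/
theorem continuous_char_valued_in_roots_of_unity_finite_order
    {l : ℕ} [Fact l.Prime]
    (K : Type*) [NormedField K] [Algebra ℚ_[l] K] [IsAlgClosure ℚ_[l] K]
    (hnorm : ∀ x : ℚ_[l], ‖algebraMap ℚ_[l] K x‖ = ‖x‖)
    (G : Type*) [CommGroup G] [TopologicalSpace G] [IsTopologicalGroup G]
    [CompactSpace G] [T2Space G]
    (χ : G →* Kˣ) (hχ : Continuous χ)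
    (htors : ∀ g : G, ∃ n : ℕ, 0 < n ∧ χ g ^ n = 1) :
    ∃ m : ℕ, 1 ≤ m ∧ ∀ g : G, χ g ^ m = 1 :=
  continuous_char_valued_in_roots_of_unity_finite_order_general K hnorm G χ hχ htors
end
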